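/- Let λ ∈ [−1, 0), let f : [0,1] → ℝ be continuous and non-constant with ∫₀¹ f(α) dα = 0, set m₀ = min f < 0, M₀ = max f > 0, and η* = 1/(λ·m₀) > 0. Define t* = ∫₀^{η*} ( ∫₀¹ (1 − λ·μ·f(α))^(−1/λ) dα )^{2λ} dμ. Then η*·(1 − M₀/m₀)^(−2) ≤ t* ≤ η*. -/

import Mathlib

open Set MeasureTheory intervalIntegral Real

/-!
For `λ ∈ [-1, 0)` put `p = -1/λ ≥ 1`. On `[0, η*]` the base `1 - λμf` stays in `[0, 1 - M₀/m₀]`, since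
`λμ ≤ 0` and `λη* m₀ = 1`. Bernoulli's inequality `(1 - λμf)^p ≥ 1 + μf`, integrated against the
mean-zero `f`, gives `K̄₀(μ) ≥ 1`, while the bound on the base gives `K̄₀(μ) ≤ (1 - M₀/m₀)^p`.
Raising to the power `2λ ≤ 0` (note `p · 2λ = -2`) squeezes the integrand of `t*` between
`(1 - M₀/m₀)⁻²` and `1`.
-/

/-- The function `K̄₀` of the paper. -/
noncomputable def blowupKernel (lam : ℝ) (f : ℝ → ℝ) (μ : ℝ) : ℝ :=
  ∫ α in (0:ℝ)..1, (1 - lam * μ * f α) ^ (-1 / lam)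

section IntervalIntegral

variable {g : ℝ → ℝ} {a b c : ℝ}

lemma mul_le_integral_of_forall_le (hab : a ≤ b) (hg : IntervalIntegrable g volume a b)
    (h : ∀ x ∈ Icc a b, c ≤ g x) : (b - a) * c ≤ ∫ x in a..b, g x := by
  simpa using integral_mono_on hab intervalIntegrable_const hg h

lemma integral_le_mul_of_forall_le (hab : a ≤ b) (hg : IntervalIntegrable g volume a b)
    (h : ∀ x ∈ Icc a b, g x ≤ c) : ∫ x in a..b, g x ≤ (b - a) * c := by
  simpa using integral_mono_on hab hg intervalIntegrable_const h

end IntervalIntegral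

section OneSubMulRpow

variable {f : ℝ → ℝ} {c p B : ℝ}

lemma continuousOn_one_sub_mul_rpow (hf : ContinuousOn f (Icc 0 1)) (hp : 0 ≤ p) :
    ContinuousOn (fun x => (1 - c * f x) ^ p) (Icc 0 1) :=
  (continuousOn_const.sub (continuousOn_const.mul hf)).rpow_const fun _ _ => Or.inr hp

/-- Only the values of `f` on `[0, 1]` enter, so `f` may be replaced by its `IccExtend`. -/
lemma continuous_integral_one_sub_mul_rpow (hf : ContinuousOn f (Icc 0 1)) (hp : 0 ≤ p) :
    Continuous fun c => ∫ x in (0:ℝ)..1, (1 - c * f x) ^ p := by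
  set F := IccExtend zero_le_one ((Icc 0 1).domRestrict f)
  have hF : Continuous F := hf.domRestrict.Icc_extend'
  have hFf : EqOn F f (uIcc 0 1) := fun x hx => by
    rw [uIcc_of_le zero_le_one] at hx
    exact IccExtend_of_mem zero_le_one _ hx
  have hcont : Continuous (Function.uncurry fun (c x : ℝ) => (1 - c * F x) ^ p) :=
    (continuous_const.sub (continuous_fst.mul (hF.comp continuous_snd))).rpow_const
      fun _ => Or.inr hp
  refine (continuous_parametric_intervalIntegral_of_continuous' (μ := volume) hcont 0 1).congr
    fun c => integral_congr fun x hx => ?_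
  simp only [hFf hx]

/-- Averaged Bernoulli inequality: `(1 - c f)^p ≥ 1 - p c f` integrates to `1` as `∫ f = 0`. -/
lemma one_le_integral_one_sub_mul_rpow (hp : 1 ≤ p) (hf : ContinuousOn f (Icc 0 1))
    (hmean : ∫ x in (0:ℝ)..1, f x = 0) (hc : ∀ x ∈ Icc (0:ℝ) 1, c * f x ≤ 1) :
    1 ≤ ∫ x in (0:ℝ)..1, (1 - c * f x) ^ p := by
  have hbernoulli : ∀ x ∈ Icc (0:ℝ) 1, 1 - p * c * f x ≤ (1 - c * f x) ^ p := fun x hx => by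
    have := one_add_mul_self_le_rpow_one_add (s := -(c * f x)) (by linarith [hc x hx]) hp
    rwa [← sub_eq_add_neg, mul_neg, ← sub_eq_add_neg, ← mul_assoc] at this
  have hlin : ∫ x in (0:ℝ)..1, (1 - p * c * f x) = 1 := by
    rw [integral_sub intervalIntegrable_const
      ((hf.intervalIntegrable_of_Icc zero_le_one).const_mul _),
      intervalIntegral.integral_const_mul, hmean]
    simp
  calc (1 : ℝ) = ∫ x in (0:ℝ)..1, (1 - p * c * f x) := hlin.symm
    _ ≤ ∫ x in (0:ℝ)..1, (1 - c * f x) ^ p :=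
      integral_mono_on zero_le_one
        (intervalIntegrable_const.sub ((hf.intervalIntegrable_of_Icc zero_le_one).const_mul _))
        ((continuousOn_one_sub_mul_rpow hf (by linarith)).intervalIntegrable_of_Icc zero_le_one)
        hbernoulli

lemma integral_one_sub_mul_rpow_le (hp : 0 ≤ p) (hf : ContinuousOn f (Icc 0 1))
    (hc : ∀ x ∈ Icc (0:ℝ) 1, c * f x ≤ 1) (hB : ∀ x ∈ Icc (0:ℝ) 1, 1 - c * f x ≤ B) :
    ∫ x in (0:ℝ)..1, (1 - c * f x) ^ p ≤ B ^ p := by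
  simpa using integral_le_mul_of_forall_le zero_le_one
    ((continuousOn_one_sub_mul_rpow hf hp).intervalIntegrable_of_Icc zero_le_one)
    fun x hx => rpow_le_rpow (by linarith [hc x hx]) (hB x hx) hp

end OneSubMulRpow

section BlowupKernel

variable {lam m₀ M₀ μ y : ℝ} {f : ℝ → ℝ}

lemma lam_mul_mul_le_one (hlam : lam < 0) (hm₀ : m₀ < 0) (hμ : μ ∈ Icc 0 (1 / (lam * m₀)))
    (hy : m₀ ≤ y) : lam * μ * y ≤ 1 := by
  have hlm : 0 < lam * m₀ := mul_pos_of_neg_of_neg hlam hm₀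
  have hμ' : μ * (lam * m₀) ≤ 1 := (le_div_iff₀ hlm).mp (by simpa using hμ.2)
  have hlμ : lam * μ ≤ 0 := mul_nonpos_of_nonpos_of_nonneg hlam.le hμ.1
  linarith [mul_le_mul_of_nonpos_left hy hlμ]

lemma one_sub_lam_mul_mul_le (hlam : lam < 0) (hM₀ : 0 ≤ M₀)
    (hμ : μ ∈ Icc 0 (1 / (lam * m₀))) (hy : y ≤ M₀) : 1 - lam * μ * y ≤ 1 - M₀ / m₀ := by
  have hM : M₀ / m₀ = lam * M₀ * (1 / (lam * m₀)) := by field_simp [hlam.ne]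
  have hlμ : lam * μ ≤ 0 := mul_nonpos_of_nonpos_of_nonneg hlam.le hμ.1
  have hlM : lam * M₀ ≤ 0 := mul_nonpos_of_nonpos_of_nonneg hlam.le hM₀
  linarith [mul_le_mul_of_nonpos_left hy hlμ, mul_le_mul_of_nonpos_left hμ.2 hlM]

lemma one_le_blowupKernel (hlam : lam ∈ Ico (-1) 0) (hf : ContinuousOn f (Icc 0 1))
    (hmean : ∫ x in (0:ℝ)..1, f x = 0) (hm₀ : ∀ x ∈ Icc (0:ℝ) 1, m₀ ≤ f x) (hm₀neg : m₀ < 0)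
    (hμ : μ ∈ Icc 0 (1 / (lam * m₀))) : 1 ≤ blowupKernel lam f μ :=
  one_le_integral_one_sub_mul_rpow (by rw [le_div_iff_of_neg hlam.2]; linarith [hlam.1]) hf hmean
    fun x hx => lam_mul_mul_le_one hlam.2 hm₀neg hμ (hm₀ x hx)

lemma blowupKernel_le (hlam : lam < 0) (hf : ContinuousOn f (Icc 0 1))
    (hm₀ : ∀ x ∈ Icc (0:ℝ) 1, m₀ ≤ f x) (hM₀ : ∀ x ∈ Icc (0:ℝ) 1, f x ≤ M₀) (hm₀neg : m₀ < 0)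
    (hM₀pos : 0 ≤ M₀) (hμ : μ ∈ Icc 0 (1 / (lam * m₀))) :
    blowupKernel lam f μ ≤ (1 - M₀ / m₀) ^ (-1 / lam) :=
  integral_one_sub_mul_rpow_le (div_nonneg_of_nonpos (by norm_num) hlam.le) hf
    (fun x hx => lam_mul_mul_le_one hlam hm₀neg hμ (hm₀ x hx))
    fun x hx => one_sub_lam_mul_mul_le hlam hM₀pos hμ (hM₀ x hx)

lemma continuous_blowupKernel (hlam : lam < 0) (hf : ContinuousOn f (Icc 0 1)) :
    Continuous (blowupKernel lam f) :=
  (continuous_integral_one_sub_mul_rpow hf (div_nonneg_of_nonpos (by norm_num) hlam.le)).comp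
    (continuous_const_mul lam)

end BlowupKernel

lemma rpow_neg_one_div_rpow_two_mul {C lam : ℝ} (hC : 0 ≤ C) (hlam : lam ≠ 0) :
    (C ^ (-1 / lam)) ^ (2 * lam) = (C ^ 2)⁻¹ := by
  rw [← rpow_mul hC, show -1 / lam * (2 * lam) = -(2 : ℕ) by field_simp; norm_num,
    rpow_neg hC, rpow_natCast]

theorem stmt10_general (lam : ℝ) (hlam : lam ∈ Set.Ico (-1 : ℝ) 0)
    (f : ℝ → ℝ) (hf : ContinuousOn f (Set.Icc 0 1))
    (hmean : (∫ α in (0:ℝ)..1, f α) = 0)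
    (m₀ M₀ : ℝ) (hm₀ : IsLeast (f '' Set.Icc 0 1) m₀)
    (hM₀ : IsGreatest (f '' Set.Icc 0 1) M₀)
    (hm₀neg : m₀ < 0) (hM₀pos : 0 < M₀) :
    (1 / (lam * m₀)) * ((1 - M₀ / m₀) ^ 2)⁻¹ ≤
      (∫ μ in (0:ℝ)..(1 / (lam * m₀)),
        (∫ α in (0:ℝ)..1, (1 - lam * μ * f α) ^ (-1 / lam)) ^ (2 * lam)) ∧
    (∫ μ in (0:ℝ)..(1 / (lam * m₀)),
        (∫ α in (0:ℝ)..1, (1 - lam * μ * f α) ^ (-1 / lam)) ^ (2 * lam)) ≤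
      1 / (lam * m₀) := by
  change _ ≤ ∫ μ in (0:ℝ)..(1 / (lam * m₀)), blowupKernel lam f μ ^ (2 * lam) ∧
    ∫ μ in (0:ℝ)..(1 / (lam * m₀)), blowupKernel lam f μ ^ (2 * lam) ≤ _
  have hη : 0 ≤ 1 / (lam * m₀) := (one_div_pos.2 (mul_pos_of_neg_of_neg hlam.2 hm₀neg)).le
  have hlower : ∀ x ∈ Icc (0:ℝ) 1, m₀ ≤ f x := fun x hx => hm₀.2 (mem_image_of_mem f hx)
  have hupper : ∀ x ∈ Icc (0:ℝ) 1, f x ≤ M₀ := fun x hx => hM₀.2 (mem_image_of_mem f hx)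
  have hK₁ : ∀ μ ∈ Icc 0 (1 / (lam * m₀)), 1 ≤ blowupKernel lam f μ := fun μ hμ =>
    one_le_blowupKernel hlam hf hmean hlower hm₀neg hμ
  have hC : 0 ≤ 1 - M₀ / m₀ := sub_nonneg.2 ((div_le_one_of_neg hm₀neg).2 (hm₀.2 hM₀.1))
  have hint : IntervalIntegrable (fun μ => blowupKernel lam f μ ^ (2 * lam)) volume 0
      (1 / (lam * m₀)) :=
    ContinuousOn.intervalIntegrable_of_Icc hη fun μ hμ =>
      (continuous_blowupKernel hlam.2 hf).continuousWithinAt.rpow_const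
        (Or.inl (zero_lt_one.trans_le (hK₁ μ hμ)).ne')
  constructor
  · simpa using mul_le_integral_of_forall_le hη hint fun μ hμ =>
      (rpow_neg_one_div_rpow_two_mul hC hlam.2.ne).symm.trans_le <|
        rpow_le_rpow_of_nonpos (by linarith [hK₁ μ hμ])
          (blowupKernel_le hlam.2 hf hlower hupper hm₀neg hM₀pos.le hμ) (by linarith [hlam.2])
  · simpa using integral_le_mul_of_forall_le hη hint fun μ hμ =>
      rpow_le_one_of_one_le_of_nonpos (hK₁ μ hμ) (by linarith [hlam.2])

/-- Estimate (esttime2): for `λ ∈ [-1,0)`, the blow-up time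
`t* = ∫₀^{η*} K̄₀(μ)^{2λ} dμ`, `η* = 1/(λ m₀)`, satisfies
`η* (1 - M₀/m₀)⁻² ≤ t* ≤ η*`. -/
theorem stmt10 (lam : ℝ) (hlam : lam ∈ Set.Ico (-1 : ℝ) 0)
    (f : ℝ → ℝ) (hf : ContinuousOn f (Set.Icc 0 1))
    (hnc : ∃ x ∈ Set.Icc (0:ℝ) 1, ∃ y ∈ Set.Icc (0:ℝ) 1, f x ≠ f y)
    (hmean : (∫ α in (0:ℝ)..1, f α) = 0)
    (m₀ M₀ : ℝ) (hm₀ : IsLeast (f '' Set.Icc 0 1) m₀)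
    (hM₀ : IsGreatest (f '' Set.Icc 0 1) M₀)
    (hm₀neg : m₀ < 0) (hM₀pos : 0 < M₀)
    (hηstar : 0 < 1 / (lam * m₀)) :
    (1 / (lam * m₀)) * ((1 - M₀ / m₀) ^ 2)⁻¹ ≤
      (∫ μ in (0:ℝ)..(1 / (lam * m₀)),
        (∫ α in (0:ℝ)..1, (1 - lam * μ * f α) ^ (-1 / lam)) ^ (2 * lam)) ∧
    (∫ μ in (0:ℝ)..(1 / (lam * m₀)),
        (∫ α in (0:ℝ)..1, (1 - lam * μ * f α) ^ (-1 / lam)) ^ (2 * lam)) ≤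
      1 / (lam * m₀) :=
  stmt10_general lam hlam f hf hmean m₀ M₀ hm₀ hM₀ hm₀neg hM₀pos
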